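/- arXiv:2601.16877 — 5 statements merged into one kernel-verified Lean document; each statement's English description precedes it below -/
import Mathlib

section
/- The subspace H_2^{≥2} = span_ℂ{ v_{x^a y^b} : a, b ≥ 0, a + b ≥ 2 } of derivations of ℂ[x,y] is a Lie subalgebra, and it is generated as a Lie algebra by the elements v_{x^a} for a ≥ 2 together with the elements v_{y^b} for b ≥ 2. -/
open MvPolynomial

/-- The polynomial ring `ℂ[x,y]`, with `x = X 0`, `y = X 1`. -/
abbrev P2 : Type := MvPolynomial (Fin 2) ℂ

/-- The Hamiltonian vector field `v_H = H_x ∂_y − H_y ∂_x`, as a derivation of `ℂ[x,y]`. -/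
noncomputable def ham (H : P2) : Derivation ℂ P2 P2 :=
  (pderiv 0 H) • (pderiv 1 : Derivation ℂ P2 P2)
    - (pderiv 1 H) • (pderiv 0 : Derivation ℂ P2 P2)

/-- The subspace `H₂^{≥2} = span{ v_{x^a y^b} : a + b ≥ 2 }` of derivations of `ℂ[x,y]`. -/
noncomputable def H2ge2 : Submodule ℂ (Derivation ℂ P2 P2) :=
  Submodule.span ℂ {D | ∃ a b : ℕ, 2 ≤ a + b ∧ D = ham (X 0 ^ a * X 1 ^ b)}

/-- The generators `v_{x^a}` (`a ≥ 2`) and `v_{y^b}` (`b ≥ 2`). -/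
noncomputable def hamGens : Set (Derivation ℂ P2 P2) :=
  {D | ∃ a : ℕ, 2 ≤ a ∧ (D = ham (X 0 ^ a) ∨ D = ham (X 1 ^ a))}

/-!
The bracket of Hamiltonian vector fields is the Hamiltonian vector field of the Poisson bracket,
`⁅v_F, v_G⁆ = v_{{F, G}}`, and on monomials `{x^a y^b, x^c y^d} = (ad - bc) x^(a+c-1) y^(b+d-1)`.
Hence the span of the `v_{x^a y^b}` with `a + b ≥ 2` is closed under the bracket, since the
degree `a + b + c + d - 2` stays at least `2`; and the monomial formula, with the pair
`x^(a+1)`, `y^(b+1)`, gives `⁅v_{x^(a+1)}, v_{y^(b+1)}⁆ = (a+1)(b+1) v_{x^a y^b}`, so every mixed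
monomial field lies in the Lie algebra generated by the pure powers.
-/

namespace LieSubalgebra

variable {R L : Type*} [CommRing R] [LieRing L] [LieAlgebra R L] {s : Set L}

theorem lie_mem_span_of_forall_lie_mem (h : ∀ x ∈ s, ∀ y ∈ s, ⁅x, y⁆ ∈ Submodule.span R s)
    {x y : L} (hx : x ∈ Submodule.span R s) (hy : y ∈ Submodule.span R s) :
    ⁅x, y⁆ ∈ Submodule.span R s := by
  induction hx, hy using Submodule.span_induction₂ with
  | mem_mem x y hx hy => exact h x hx y hy
  | zero_left => simp
  | zero_right => simp
  | add_left _ _ _ _ _ _ h₁ h₂ => rw [add_lie]; exact add_mem h₁ h₂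
  | add_right _ _ _ _ _ _ h₁ h₂ => rw [lie_add]; exact add_mem h₁ h₂
  | smul_left r _ _ _ _ h => rw [smul_lie]; exact Submodule.smul_mem _ r h
  | smul_right r _ _ _ _ h => rw [lie_smul]; exact Submodule.smul_mem _ r h

theorem coe_lieSpan_eq_span_of_forall_lie_mem
    (h : ∀ x ∈ s, ∀ y ∈ s, ⁅x, y⁆ ∈ Submodule.span R s) :
    (lieSpan R L s : Set L) = Submodule.span R s := by
  let K : LieSubalgebra R L :=
    { Submodule.span R s with lie_mem' := lie_mem_span_of_forall_lie_mem h }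
  exact Set.Subset.antisymm (lieSpan_le (K := K) |>.mpr Submodule.subset_span)
    submodule_span_le_lieSpan

end LieSubalgebra

theorem MvPolynomial.pderiv_pderiv_comm {σ R : Type*} [CommSemiring R] (i j : σ)
    (f : MvPolynomial σ R) : pderiv i (pderiv j f) = pderiv j (pderiv i f) := by
  classical
  induction f using MvPolynomial.induction_on with
  | C a => simp
  | add p q hp hq => simp [hp, hq]
  | mul_X p n hp =>
    simp only [pderiv_mul, map_add, hp, pderiv_X, Pi.single_apply]
    split_ifs <;> simp [add_right_comm]

noncomputable def poissonBracket (F G : P2) : P2 :=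
  pderiv 0 F * pderiv 1 G - pderiv 1 F * pderiv 0 G

theorem ham_apply (H f : P2) :
    ham H f = pderiv 0 H * pderiv 1 f - pderiv 1 H * pderiv 0 f := by
  simp [ham, smul_eq_mul]

theorem ham_smul (c : ℂ) (F : P2) : ham (c • F) = c • ham F := by
  simp only [ham, Derivation.map_smul, smul_assoc, smul_sub]

theorem lie_ham_ham (F G : P2) : ⁅ham F, ham G⁆ = ham (poissonBracket F G) := by
  refine derivation_ext fun i => ?_
  fin_cases i <;>
  · simp only [Fin.zero_eta, Fin.mk_one, Derivation.commutator_apply, ham_apply, pderiv_X,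
      Pi.single_eq_same, Pi.single_eq_of_ne, zero_ne_one, one_ne_zero, ne_eq, not_false_eq_true,
      mul_zero, mul_one, zero_sub, sub_zero, map_neg, map_sub, Derivation.leibniz, smul_eq_mul,
      poissonBracket]
    rw [pderiv_pderiv_comm 1 0 F, pderiv_pderiv_comm 1 0 G]
    ring

theorem pderiv_zero_X_pow_mul_X_pow (a b : ℕ) :
    pderiv 0 (X 0 ^ a * X 1 ^ b : P2) = a • (X 0 ^ (a - 1) * X 1 ^ b) := by
  simp only [Derivation.leibniz, Derivation.leibniz_pow, pderiv_X, Pi.single_eq_same,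
    Pi.single_eq_of_ne, one_ne_zero, ne_eq, not_false_eq_true, smul_eq_mul, mul_zero, mul_one,
    nsmul_eq_mul, zero_add]
  ring

theorem pderiv_one_X_pow_mul_X_pow (a b : ℕ) :
    pderiv 1 (X 0 ^ a * X 1 ^ b : P2) = b • (X 0 ^ a * X 1 ^ (b - 1)) := by
  simp only [Derivation.leibniz, Derivation.leibniz_pow, pderiv_X, Pi.single_eq_same,
    Pi.single_eq_of_ne, zero_ne_one, ne_eq, not_false_eq_true, smul_eq_mul, mul_zero, mul_one,
    nsmul_eq_mul, add_zero]
  ring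

/-- When `a + c = 0` or `b + d = 0` the coefficient vanishes, so the truncated exponents are
harmless. -/
theorem poissonBracket_X_pow_mul_X_pow (a b c d : ℕ) :
    poissonBracket (X 0 ^ a * X 1 ^ b) (X 0 ^ c * X 1 ^ d)
      = (a * d - b * c : ℂ) • (X 0 ^ (a + c - 1) * X 1 ^ (b + d - 1)) := by
  rw [poissonBracket, pderiv_zero_X_pow_mul_X_pow, pderiv_one_X_pow_mul_X_pow,
    pderiv_zero_X_pow_mul_X_pow, pderiv_one_X_pow_mul_X_pow]
  rcases a with _ | a <;> rcases b with _ | b <;> rcases c with _ | c <;> rcases d with _ | d <;>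
    simp [smul_eq_C_mul, pow_succ, pow_add] <;> ring

theorem lie_ham_X_pow_ham_X_pow (a b : ℕ) :
    ⁅ham (X 0 ^ (a + 1)), ham (X 1 ^ (b + 1))⁆
      = (((a + 1) * (b + 1) : ℕ) : ℂ) • ham (X 0 ^ a * X 1 ^ b) := by
  have h := poissonBracket_X_pow_mul_X_pow (a + 1) 0 0 (b + 1)
  simp only [pow_zero, mul_one, one_mul, add_zero, zero_add, Nat.add_sub_cancel,
    Nat.cast_zero, zero_mul, sub_zero] at h
  rw [lie_ham_ham, h, ham_smul, Nat.cast_mul]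

def hamMonomials : Set (Derivation ℂ P2 P2) :=
  {D | ∃ a b : ℕ, 2 ≤ a + b ∧ D = ham (X 0 ^ a * X 1 ^ b)}

theorem H2ge2_eq_span_hamMonomials : H2ge2 = Submodule.span ℂ hamMonomials := rfl

theorem lie_mem_span_hamMonomials :
    ∀ D ∈ hamMonomials, ∀ D' ∈ hamMonomials, ⁅D, D'⁆ ∈ Submodule.span ℂ hamMonomials := by
  rintro _ ⟨a, b, hab, rfl⟩ _ ⟨c, d, hcd, rfl⟩
  rw [lie_ham_ham, poissonBracket_X_pow_mul_X_pow, ham_smul]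
  exact Submodule.smul_mem _ _ (Submodule.subset_span ⟨_, _, by omega, rfl⟩)

theorem hamGens_subset_hamMonomials : hamGens ⊆ hamMonomials := by
  rintro _ ⟨a, ha, rfl | rfl⟩
  · exact ⟨a, 0, ha, by rw [pow_zero, mul_one]⟩
  · exact ⟨0, a, by omega, by rw [pow_zero, one_mul]⟩

theorem hamMonomials_subset_lieSpan_hamGens :
    hamMonomials ⊆ LieSubalgebra.lieSpan ℂ (Derivation ℂ P2 P2) hamGens := by
  rintro _ ⟨a, b, hab, rfl⟩
  rcases a with _ | a
  · rw [pow_zero, one_mul]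
    exact LieSubalgebra.subset_lieSpan ⟨b, by omega, Or.inr rfl⟩
  rcases b with _ | b
  · rw [pow_zero, mul_one]
    exact LieSubalgebra.subset_lieSpan ⟨a + 1, by omega, Or.inl rfl⟩
  have hne : (((a + 2) * (b + 2) : ℕ) : ℂ) ≠ 0 := Nat.cast_ne_zero.mpr (by positivity)
  rw [SetLike.mem_coe, ← LieSubalgebra.mem_toSubmodule, ← Submodule.smul_mem_iff _ hne,
    ← lie_ham_X_pow_ham_X_pow]
  exact LieSubalgebra.lie_mem _ (LieSubalgebra.subset_lieSpan ⟨a + 2, by omega, Or.inl rfl⟩)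
    (LieSubalgebra.subset_lieSpan ⟨b + 2, by omega, Or.inr rfl⟩)

theorem stmt1 :
    (∀ D D' : Derivation ℂ P2 P2, D ∈ H2ge2 → D' ∈ H2ge2 → ⁅D, D'⁆ ∈ H2ge2) ∧
    ((LieSubalgebra.lieSpan ℂ (Derivation ℂ P2 P2) hamGens : Set (Derivation ℂ P2 P2)) =
      (H2ge2 : Set (Derivation ℂ P2 P2))) := by
  rw [H2ge2_eq_span_hamMonomials]
  refine ⟨fun D D' => LieSubalgebra.lie_mem_span_of_forall_lie_mem lie_mem_span_hamMonomials, ?_⟩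
  rw [← LieSubalgebra.coe_lieSpan_eq_span_of_forall_lie_mem lie_mem_span_hamMonomials]
  congr 1
  exact le_antisymm (LieSubalgebra.lieSpan_mono hamGens_subset_hamMonomials)
    (LieSubalgebra.lieSpan_le.mpr hamMonomials_subset_lieSpan_hamGens)
end

section
/- For all integers a, b ≥ 0 with a + b ≥ 2, the first-order differential operator V_{a,b} = Σ_{i=1}^n ( a·x_i^{a−1} y_i^b ∂/∂y_i − b·x_i^a y_i^{b−1} ∂/∂x_i ) on R maps the ideal I_+ into itself. Consequently each such V_{a,b} induces a well-defined operator on DR_n = R/I_+, and the induced operators satisfy [V_{a,b}, V_{a',b'}] = (ab' − a'b)·V_{a+a'−1, b+b'−1}; in particular the operators E_k = Σ_{i=1}^n y_i^k ∂/∂x_i and F_k = Σ_{i=1}^n x_i^k ∂/∂y_i (k ≥ 1) induce well-defined operators on DR_n generating an action of the Lie algebra H_2^{≥2} of Hamiltonian vector fields of degree ≥ 2. -/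
open MvPolynomial

/-- The polynomial ring `R = ℂ[x_1,…,x_n,y_1,…,y_n]`: the variable `x_i` is
`X (Sum.inl i)` and `y_i` is `X (Sum.inr i)`. -/
abbrev Rn (n : ℕ) : Type := MvPolynomial (Fin n ⊕ Fin n) ℂ

/-- The diagonal action of a permutation `σ ∈ S_n` on `R`, permuting the `x_i` and the
`y_i` simultaneously. -/
noncomputable def permR (n : ℕ) (σ : Equiv.Perm (Fin n)) : Rn n →ₐ[ℂ] Rn n :=
  MvPolynomial.rename (Sum.map σ σ)

/-- A polynomial is symmetric if it is fixed by the diagonal `S_n`-action. -/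
def IsSymP {n : ℕ} (f : Rn n) : Prop := ∀ σ : Equiv.Perm (Fin n), permR n σ f = f

/-- A polynomial is antisymmetric if every permutation acts on it by its sign. -/
def IsAntiSymP {n : ℕ} (f : Rn n) : Prop :=
  ∀ σ : Equiv.Perm (Fin n), permR n σ f = (Equiv.Perm.sign σ : ℤ) • f

/-- The ideal `I_+` generated by all symmetric polynomials with zero constant term. -/
noncomputable def Iplus (n : ℕ) : Ideal (Rn n) :=
  Ideal.span {f | IsSymP f ∧ constantCoeff f = 0}

/-- The ideal `J` generated by all antisymmetric polynomials. -/
noncomputable def Jid (n : ℕ) : Ideal (Rn n) :=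
  Ideal.span {f | IsAntiSymP f}

/-- The maximal homogeneous ideal `m = (x_1,…,x_n,y_1,…,y_n)`. -/
noncomputable def mId (n : ℕ) : Ideal (Rn n) :=
  Ideal.span (Set.range X)

/-- The operator `E_k = Σ_i y_i^k ∂/∂x_i`. -/
noncomputable def Eop (n k : ℕ) : Rn n →ₗ[ℂ] Rn n :=
  ∑ i : Fin n,
    (LinearMap.mulLeft ℂ ((X (Sum.inr i) : Rn n) ^ k)) ∘ₗ (pderiv (Sum.inl i)).toLinearMap

/-- The operator `F_k = Σ_i x_i^k ∂/∂y_i`. -/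
noncomputable def Fop (n k : ℕ) : Rn n →ₗ[ℂ] Rn n :=
  ∑ i : Fin n,
    (LinearMap.mulLeft ℂ ((X (Sum.inl i) : Rn n) ^ k)) ∘ₗ (pderiv (Sum.inr i)).toLinearMap

/-- The operator `E_k^* = Σ_i x_i (∂/∂y_i)^k`. -/
noncomputable def Estar (n k : ℕ) : Rn n →ₗ[ℂ] Rn n :=
  ∑ i : Fin n,
    (LinearMap.mulLeft ℂ ((X (Sum.inl i) : Rn n))) ∘ₗ ((pderiv (Sum.inr i)).toLinearMap ^ k)

/-- The operator `F_k^* = Σ_i y_i (∂/∂x_i)^k`. -/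
noncomputable def Fstar (n k : ℕ) : Rn n →ₗ[ℂ] Rn n :=
  ∑ i : Fin n,
    (LinearMap.mulLeft ℂ ((X (Sum.inr i) : Rn n))) ∘ₗ ((pderiv (Sum.inl i)).toLinearMap ^ k)

/-- The constant-coefficient differential operator `g(∂/∂x_1,…,∂/∂x_n,∂/∂y_1,…,∂/∂y_n)`
obtained by substituting partial derivatives for the variables of `g`. -/
noncomputable def applyDeriv (n : ℕ) (g : Rn n) : Module.End ℂ (Rn n) :=
  ∑ s ∈ g.support, (MvPolynomial.coeff s g) •
    (((Finset.univ : Finset (Fin n ⊕ Fin n)).toList).map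
      (fun j => ((pderiv j).toLinearMap : Module.End ℂ (Rn n)) ^ (s j))).prod

/-- The space of diagonal harmonics `DH_n`. -/
def DH (n : ℕ) : Set (Rn n) :=
  {f | ∀ g : Rn n, IsSymP g → constantCoeff g = 0 → applyDeriv n g f = 0}

/-- The Vandermonde determinant `Δ(x) = ∏_{i<j}(x_i − x_j)`. -/
noncomputable def Dx (n : ℕ) : Rn n :=
  ∏ p ∈ Finset.univ.filter (fun p : Fin n × Fin n => p.1 < p.2),
    (X (Sum.inl p.1) - X (Sum.inl p.2))

/-- The Vandermonde determinant `Δ(y) = ∏_{i<j}(y_i − y_j)`. -/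
noncomputable def Dy (n : ℕ) : Rn n :=
  ∏ p ∈ Finset.univ.filter (fun p : Fin n × Fin n => p.1 < p.2),
    (X (Sum.inr p.1) - X (Sum.inr p.2))

/-- Evaluation of a polynomial `φ` in `m` commuting variables on a family of `m`
pairwise commuting endomorphisms. -/
noncomputable def evalEndo {V : Type*} [AddCommMonoid V] [Module ℂ V] {m : ℕ}
    (T : Fin m → Module.End ℂ V) (φ : MvPolynomial (Fin m) ℂ) : Module.End ℂ V :=
  ∑ s ∈ φ.support, (MvPolynomial.coeff s φ) •
    (((List.finRange m).map (fun j => (T j) ^ (s j))).prod)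

/-- Weights recording the bigrading of `R`: an `x`-variable has bidegree `(1,0)` and a
`y`-variable has bidegree `(0,1)`. -/
def wtB (n : ℕ) : Fin n ⊕ Fin n → ℕ × ℕ :=
  Sum.elim (fun _ => ((1 : ℕ), (0 : ℕ))) (fun _ => ((0 : ℕ), (1 : ℕ)))

/-- Bihomogeneity of bidegree `d = (d_x, d_y)` with respect to the bigrading of `R`. -/
def BiHom (n : ℕ) (f : Rn n) (d : ℕ × ℕ) : Prop :=
  MvPolynomial.IsWeightedHomogeneous (wtB n) f d

/-- The first-order differential operator
`V_{a,b} = Σ_i ( a x_i^{a−1} y_i^b ∂/∂y_i − b x_i^a y_i^{b−1} ∂/∂x_i )` on `R`. -/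
noncomputable def Vop (n a b : ℕ) : Rn n →ₗ[ℂ] Rn n :=
  ∑ i : Fin n,
    ((LinearMap.mulLeft ℂ ((a : Rn n) * X (Sum.inl i) ^ (a - 1) * X (Sum.inr i) ^ b)) ∘ₗ
        (pderiv (Sum.inr i)).toLinearMap
      - (LinearMap.mulLeft ℂ ((b : Rn n) * X (Sum.inl i) ^ a * X (Sum.inr i) ^ (b - 1))) ∘ₗ
        (pderiv (Sum.inl i)).toLinearMap)


noncomputable def vfun (n a b : ℕ) : Fin n ⊕ Fin n → Rn n :=
  Sum.elim (fun i => -((b : Rn n) * X (Sum.inl i) ^ a * X (Sum.inr i) ^ (b - 1)))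
    (fun i => (a : Rn n) * X (Sum.inl i) ^ (a - 1) * X (Sum.inr i) ^ b)

lemma Vop_apply (n a b : ℕ) (f : Rn n) :
    Vop n a b f = ∑ i : Fin n,
      ((a : Rn n) * X (Sum.inl i) ^ (a - 1) * X (Sum.inr i) ^ b * pderiv (Sum.inr i) f
        - (b : Rn n) * X (Sum.inl i) ^ a * X (Sum.inr i) ^ (b - 1) * pderiv (Sum.inl i) f) := by
  simp only [Vop, LinearMap.sum_apply, LinearMap.sub_apply, LinearMap.coe_comp,
    Function.comp_apply, LinearMap.mulLeft_apply, Derivation.coeFn_coe]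

noncomputable def VopD (n a b : ℕ) : Derivation ℂ (Rn n) (Rn n) where
  toLinearMap := Vop n a b
  map_one_eq_zero' := by
    show Vop n a b 1 = 0
    simp [Vop_apply, pderiv_one]
  leibniz' f g := by
    show Vop n a b (f * g) = f • Vop n a b g + g • Vop n a b f
    simp only [Vop_apply, pderiv_mul, smul_eq_mul, Finset.mul_sum, ← Finset.sum_add_distrib]
    exact Finset.sum_congr rfl fun i _ => by ring

noncomputable def Vder (n a b : ℕ) : Derivation ℂ (Rn n) (Rn n) :=
  MvPolynomial.mkDerivation ℂ (vfun n a b)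

lemma Vder_X (n a b : ℕ) (j : Fin n ⊕ Fin n) : Vder n a b (X j) = vfun n a b j :=
  mkDerivation_X _ _ _

lemma Vop_eq_Vder (n a b : ℕ) (f : Rn n) : Vop n a b f = Vder n a b f := by
  have h : VopD n a b = Vder n a b := by
    apply MvPolynomial.derivation_ext
    intro j
    rw [Vder_X]
    show Vop n a b (X j) = vfun n a b j
    cases j with
    | inl i => simp [Vop_apply, vfun, Pi.single_apply, Finset.sum_ite_eq']
    | inr i => simp [Vop_apply, vfun, Pi.single_apply, Finset.sum_ite_eq']
  exact DFunLike.congr_fun h f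

lemma Vop_leibniz (n a b : ℕ) (p q : Rn n) :
    Vop n a b (p * q) = p * Vop n a b q + q * Vop n a b p := by
  simp only [Vop_eq_Vder]
  rw [Derivation.leibniz]
  simp [smul_eq_mul]

lemma der_natCast_mul {n : ℕ} (D : Derivation ℂ (Rn n) (Rn n)) (c : ℕ) (p : Rn n) :
    D ((c : Rn n) * p) = (c : Rn n) * D p := by
  have h : (c : Rn n) * p = (c : ℂ) • p := by
    rw [MvPolynomial.smul_eq_C_mul, map_natCast]
  rw [h, D.map_smul, MvPolynomial.smul_eq_C_mul, map_natCast]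

lemma Vder_xy (n a b : ℕ) (i : Fin n) (c d : ℕ) :
    Vder n a b (X (Sum.inl i) ^ c * X (Sum.inr i) ^ d)
      = ((a * d : ℕ) : Rn n) * X (Sum.inl i) ^ (a + c - 1) * X (Sum.inr i) ^ (b + d - 1)
        - ((b * c : ℕ) : Rn n) * X (Sum.inl i) ^ (a + c - 1) * X (Sum.inr i) ^ (b + d - 1) := by
  rw [Derivation.leibniz, Derivation.leibniz_pow, Derivation.leibniz_pow, Vder_X, Vder_X]
  simp only [vfun, Sum.elim_inl, Sum.elim_inr, smul_eq_mul, nsmul_eq_mul]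
  rw [sub_eq_add_neg]
  congr 1
  · rcases Nat.eq_zero_or_pos a with rfl | ha
    · push_cast; ring
    · rcases Nat.eq_zero_or_pos d with rfl | hd
      · push_cast; ring
      · rw [show a + c - 1 = (a - 1) + c from by omega, show b + d - 1 = b + (d - 1) from by omega]
        push_cast [pow_add]; ring
  · rcases Nat.eq_zero_or_pos b with rfl | hb
    · push_cast; ring
    · rcases Nat.eq_zero_or_pos c with rfl | hc
      · push_cast; ring
      · rw [show a + c - 1 = a + (c - 1) from by omega, show b + d - 1 = (b - 1) + d from by omega]
        push_cast [pow_add]; ring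

lemma Vder_vfun_inr (n a b a' b' : ℕ) (i : Fin n) :
    Vder n a b (vfun n a' b' (Sum.inr i))
      = ((a' : Rn n)) * (((a * b' : ℕ) : Rn n) * X (Sum.inl i) ^ (a + (a' - 1) - 1) * X (Sum.inr i) ^ (b + b' - 1)
        - ((b * (a' - 1) : ℕ) : Rn n) * X (Sum.inl i) ^ (a + (a' - 1) - 1) * X (Sum.inr i) ^ (b + b' - 1)) := by
  show Vder n a b ((a' : Rn n) * X (Sum.inl i) ^ (a' - 1) * X (Sum.inr i) ^ b') = _
  rw [mul_assoc, der_natCast_mul, Vder_xy]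

lemma Vder_vfun_inl (n a b a' b' : ℕ) (i : Fin n) :
    Vder n a b (vfun n a' b' (Sum.inl i))
      = -(((b' : Rn n)) * (((a * (b' - 1) : ℕ) : Rn n) * X (Sum.inl i) ^ (a + a' - 1) * X (Sum.inr i) ^ (b + (b' - 1) - 1)
        - ((b * a' : ℕ) : Rn n) * X (Sum.inl i) ^ (a + a' - 1) * X (Sum.inr i) ^ (b + (b' - 1) - 1))) := by
  show Vder n a b (-((b' : Rn n) * X (Sum.inl i) ^ a' * X (Sum.inr i) ^ (b' - 1))) = _
  rw [map_neg, mul_assoc, der_natCast_mul, Vder_xy]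

lemma Vder_bracket (n a b a' b' : ℕ) (h : 2 ≤ a + b) (h' : 2 ≤ a' + b') :
    ⁅Vder n a b, Vder n a' b'⁆
      = (((a : ℂ) * b' - (a' : ℂ) * b)) • Vder n (a + a' - 1) (b + b' - 1) := by
  apply MvPolynomial.derivation_ext
  intro j
  rw [Derivation.commutator_apply, Derivation.smul_apply, Vder_X, Vder_X, Vder_X,
    MvPolynomial.smul_eq_C_mul, map_sub, map_mul, map_mul, map_natCast, map_natCast,
    map_natCast, map_natCast]
  cases j with
  | inr i =>
    rw [Vder_vfun_inr, Vder_vfun_inr]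
    show _ = _ * (((a + a' - 1 : ℕ) : Rn n) * X (Sum.inl i) ^ (a + a' - 1 - 1) * X (Sum.inr i) ^ (b + b' - 1))
    rw [show b' + b - 1 = b + b' - 1 from by omega]
    rcases Nat.eq_zero_or_pos a with rfl | ha <;> rcases Nat.eq_zero_or_pos a' with rfl | ha'
    · push_cast; ring
    · have h1 : 1 ≤ a' := by omega
      simp only [zero_add, Nat.zero_add]
      push_cast [Nat.cast_sub h1]; ring
    · have h1 : 1 ≤ a := by omega
      simp only [zero_add, add_zero, Nat.zero_add, Nat.add_zero]
      push_cast [Nat.cast_sub h1]; ring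
    · have h1 : 1 ≤ a := by omega
      have h1' : 1 ≤ a' := by omega
      rw [show a + (a' - 1) - 1 = (a - 1) + (a' - 1) from by omega,
        show a' + (a - 1) - 1 = (a - 1) + (a' - 1) from by omega,
        show a + a' - 1 - 1 = (a - 1) + (a' - 1) from by omega]
      push_cast [Nat.cast_sub h1, Nat.cast_sub h1', Nat.cast_sub (show 1 ≤ a + a' by omega), pow_add]
      ring
  | inl i =>
    rw [Vder_vfun_inl, Vder_vfun_inl]
    show _ = _ * -(((b + b' - 1 : ℕ) : Rn n) * X (Sum.inl i) ^ (a + a' - 1) * X (Sum.inr i) ^ (b + b' - 1 - 1))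
    rw [show a' + a - 1 = a + a' - 1 from by omega]
    rcases Nat.eq_zero_or_pos b with rfl | hb <;> rcases Nat.eq_zero_or_pos b' with rfl | hb'
    · push_cast; ring
    · have h1 : 1 ≤ b' := by omega
      simp only [zero_add, Nat.zero_add]
      push_cast [Nat.cast_sub h1]; ring
    · have h1 : 1 ≤ b := by omega
      simp only [zero_add, add_zero, Nat.zero_add, Nat.add_zero]
      push_cast [Nat.cast_sub h1]; ring
    · have h1 : 1 ≤ b := by omega
      have h1' : 1 ≤ b' := by omega
      rw [show b + (b' - 1) - 1 = (b - 1) + (b' - 1) from by omega,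
        show b' + (b - 1) - 1 = (b - 1) + (b' - 1) from by omega,
        show b + b' - 1 - 1 = (b - 1) + (b' - 1) from by omega]
      push_cast [Nat.cast_sub h1, Nat.cast_sub h1', Nat.cast_sub (show 1 ≤ b + b' by omega), pow_add]
      ring

lemma Vop_perm (n a b : ℕ) (σ : Equiv.Perm (Fin n)) (f : Rn n) :
    permR n σ (Vop n a b f) = Vop n a b (permR n σ f) := by
  have hinj : Function.Injective (Sum.map σ σ) :=
    Sum.map_injective.mpr ⟨σ.injective, σ.injective⟩
  rw [Vop_apply, Vop_apply, map_sum]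
  refine Fintype.sum_equiv σ _ _ fun i => ?_
  rw [map_sub]
  have hr : ∀ j, permR n σ (pderiv j f) = pderiv (Sum.map σ σ j) (permR n σ f) :=
    fun j => (pderiv_rename hinj j f).symm
  have h1 := hr (Sum.inr i)
  have h2 := hr (Sum.inl i)
  simp only [Sum.map_inr, Sum.map_inl] at h1 h2
  simp only [map_mul, map_pow, map_natCast, permR, rename_X, Sum.map_inl, Sum.map_inr] at *
  rw [h1, h2]

lemma Vop_constantCoeff (n a b : ℕ) (hab : 2 ≤ a + b) (f : Rn n) :
    constantCoeff (Vop n a b f) = 0 := by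
  rw [Vop_apply, map_sum]
  refine Finset.sum_eq_zero fun i _ => ?_
  simp only [map_sub, map_mul, map_pow, map_natCast, constantCoeff_X]
  rcases Nat.eq_zero_or_pos b with rfl | hb
  · have : (0:ℂ) ^ (a-1) = 0 := zero_pow (by omega)
    simp [this]
  · have : (0:ℂ) ^ b = 0 := zero_pow (by omega)
    rcases Nat.eq_zero_or_pos a with rfl | ha
    · have h2 : (0:ℂ) ^ (b-1) = 0 := zero_pow (by omega)
      simp [this, h2]
    · have h2 : (0:ℂ) ^ a = 0 := zero_pow (by omega)
      simp [this, h2]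

lemma Vop_mem_Iplus (n a b : ℕ) (hab : 2 ≤ a + b) (f : Rn n) (hf : f ∈ Iplus n) :
    Vop n a b f ∈ Iplus n := by
  refine Submodule.span_induction ?_ ?_ ?_ ?_ hf
  · intro g hg
    apply Ideal.subset_span
    refine ⟨fun σ => ?_, Vop_constantCoeff n a b hab g⟩
    rw [Vop_perm, hg.1 σ]
  · simp only [map_zero]
    exact (Iplus n).zero_mem
  · intro p q _ _ hp hq
    rw [map_add]
    exact (Iplus n).add_mem hp hq
  · intro r p hpmem hp
    rw [smul_eq_mul, Vop_leibniz]
    exact (Iplus n).add_mem (Ideal.mul_mem_left _ _ hp) (Ideal.mul_mem_right _ _ hpmem)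


theorem stmt2 (n : ℕ) (hn : 1 ≤ n) :
    -- each `V_{a,b}` with `a + b ≥ 2` maps `I_+` into itself, hence induces a
    -- well-defined operator on `DR_n = R/I_+`
    (∀ a b : ℕ, 2 ≤ a + b → ∀ f ∈ Iplus n, Vop n a b f ∈ Iplus n) ∧
    -- on `DR_n` the induced operators satisfy
    -- `[V_{a,b}, V_{a',b'}] = (ab' − a'b)·V_{a+a'−1, b+b'−1}`
    (∀ a b a' b' : ℕ, 2 ≤ a + b → 2 ≤ a' + b' → ∀ f : Rn n,
      Vop n a b (Vop n a' b' f) - Vop n a' b' (Vop n a b f)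
        - ((a : ℂ) * b' - (a' : ℂ) * b) • Vop n (a + a' - 1) (b + b' - 1) f ∈ Iplus n) ∧
    -- the operators `E_k`, `F_k` (k ≥ 1) preserve `I_+`, hence induce well-defined
    -- operators on `DR_n`
    (∀ k : ℕ, 1 ≤ k → ∀ f ∈ Iplus n, Eop n k f ∈ Iplus n ∧ Fop n k f ∈ Iplus n) ∧
    -- `E_k` and `F_k` are (up to scalar) the operators `V_{0,k+1}` and `V_{k+1,0}`,
    -- so they generate an action of the Lie algebra `H_2^{≥2}` on `DR_n`
    (∀ k : ℕ, 1 ≤ k →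
      Vop n 0 (k + 1) = -(((k : ℂ) + 1)) • Eop n k ∧
      Vop n (k + 1) 0 = (((k : ℂ) + 1)) • Fop n k) := by
  
  refine ⟨fun a b hab f hf => Vop_mem_Iplus n a b hab f hf, ?_, ?_, ?_⟩
  · intro a b a' b' h h' f
    have key : Vop n a b (Vop n a' b' f) - Vop n a' b' (Vop n a b f)
        - ((a : ℂ) * b' - (a' : ℂ) * b) • Vop n (a + a' - 1) (b + b' - 1) f = 0 := by
      have hb := Vder_bracket n a b a' b' h h'
      have hb' := DFunLike.congr_fun hb f
      rw [Derivation.commutator_apply, Derivation.smul_apply] at hb'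
      simp only [Vop_eq_Vder]
      rw [hb']
      ring
    rw [key]
    exact (Iplus n).zero_mem
  · intro k hk f hf
    have hE : Vop n 0 (k + 1) = -(((k : ℂ) + 1)) • Eop n k := by
      apply LinearMap.ext
      intro g
      rw [Vop_apply]
      simp only [LinearMap.smul_apply, Eop, LinearMap.sum_apply, LinearMap.coe_comp,
        Function.comp_apply, LinearMap.mulLeft_apply, Derivation.coeFn_coe, Finset.smul_sum]
      refine Finset.sum_congr rfl fun i _ => ?_
      rw [MvPolynomial.smul_eq_C_mul]
      simp only [Nat.cast_zero, zero_mul, Nat.add_sub_cancel, pow_zero, one_mul,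
        Nat.cast_add, Nat.cast_one, map_neg, map_add, map_one, map_natCast]
      ring
    have hF : Vop n (k + 1) 0 = (((k : ℂ) + 1)) • Fop n k := by
      apply LinearMap.ext
      intro g
      rw [Vop_apply]
      simp only [LinearMap.smul_apply, Fop, LinearMap.sum_apply, LinearMap.coe_comp,
        Function.comp_apply, LinearMap.mulLeft_apply, Derivation.coeFn_coe, Finset.smul_sum]
      refine Finset.sum_congr rfl fun i _ => ?_
      rw [MvPolynomial.smul_eq_C_mul]
      simp only [Nat.cast_zero, zero_mul, Nat.add_sub_cancel, pow_zero, one_mul, mul_one,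
        Nat.cast_add, Nat.cast_one, map_add, map_one, map_natCast]
      ring
    constructor
    · have h1 : Vop n 0 (k + 1) f ∈ Iplus n := Vop_mem_Iplus n 0 (k + 1) (by omega) f hf
      rw [hE] at h1
      have hne : ((k : ℂ) + 1) ≠ 0 := by
        have h0 : ((k + 1 : ℕ) : ℂ) ≠ 0 := Nat.cast_ne_zero.mpr (Nat.succ_ne_zero k)
        push_cast at h0; exact h0
      have h2 : Eop n k f = (-(((k : ℂ) + 1)))⁻¹ • ((-(((k : ℂ) + 1)) • Eop n k) f) := by
        rw [LinearMap.smul_apply, smul_smul, inv_mul_cancel₀ (neg_ne_zero.mpr hne), one_smul]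
      rw [h2, MvPolynomial.smul_eq_C_mul]
      exact Ideal.mul_mem_left _ _ h1
    · have h1 : Vop n (k + 1) 0 f ∈ Iplus n := Vop_mem_Iplus n (k + 1) 0 (by omega) f hf
      rw [hF] at h1
      have hne : ((k : ℂ) + 1) ≠ 0 := by
        have h0 : ((k + 1 : ℕ) : ℂ) ≠ 0 := Nat.cast_ne_zero.mpr (Nat.succ_ne_zero k)
        push_cast at h0; exact h0
      have h2 : Fop n k f = ((((k : ℂ) + 1)))⁻¹ • (((((k : ℂ) + 1)) • Fop n k) f) := by
        rw [LinearMap.smul_apply, smul_smul, inv_mul_cancel₀ hne, one_smul]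
      rw [h2, MvPolynomial.smul_eq_C_mul]
      exact Ideal.mul_mem_left _ _ h1
  · intro k hk
    constructor
    · apply LinearMap.ext
      intro g
      rw [Vop_apply]
      simp only [LinearMap.smul_apply, Eop, LinearMap.sum_apply, LinearMap.coe_comp,
        Function.comp_apply, LinearMap.mulLeft_apply, Derivation.coeFn_coe, Finset.smul_sum]
      refine Finset.sum_congr rfl fun i _ => ?_
      rw [MvPolynomial.smul_eq_C_mul]
      simp only [Nat.cast_zero, zero_mul, Nat.add_sub_cancel, pow_zero, one_mul,
        Nat.cast_add, Nat.cast_one, map_neg, map_add, map_one, map_natCast]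
      ring
    · apply LinearMap.ext
      intro g
      rw [Vop_apply]
      simp only [LinearMap.smul_apply, Fop, LinearMap.sum_apply, LinearMap.coe_comp,
        Function.comp_apply, LinearMap.mulLeft_apply, Derivation.coeFn_coe, Finset.smul_sum]
      refine Finset.sum_congr rfl fun i _ => ?_
      rw [MvPolynomial.smul_eq_C_mul]
      simp only [Nat.cast_zero, zero_mul, Nat.add_sub_cancel, pow_zero, one_mul, mul_one,
        Nat.cast_add, Nat.cast_one, map_add, map_one, map_natCast]
      ring
end

section
/- Let A ⊂ R be the subspace of antisymmetric polynomials. The two composite maps A → J → J/mJ and A → R → DR_n (the latter landing in the sign-isotypic component (DR_n)^sgn) are both surjective, and their kernels coincide: A ∩ mJ = A ∩ I_+. Consequently the assignment [g mod mJ] ↦ [g mod I_+], for g ∈ A, is a well-defined isomorphism of bigraded vector spaces J/mJ ≅ (DR_n)^sgn. -/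
open MvPolynomial

section AuxAnti

open Equiv MvPolynomial

variable {n : ℕ}

/-- The sign of a permutation as a complex number. -/
noncomputable def sgnC (σ : Equiv.Perm (Fin n)) : ℂ := ((Equiv.Perm.sign σ : ℤ) : ℂ)

lemma sgnC_mul (σ τ : Equiv.Perm (Fin n)) : sgnC (σ * τ) = sgnC σ * sgnC τ := by
  simp [sgnC, ← Int.cast_mul]

lemma sgnC_mul_self (σ : Equiv.Perm (Fin n)) : sgnC σ * sgnC σ = 1 := by
  simp [sgnC, ← Int.cast_mul, Int.units_mul_self]

lemma sgnC_smul_smul (σ : Equiv.Perm (Fin n)) (f : Rn n) : sgnC σ • sgnC σ • f = f := by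
  rw [smul_smul, sgnC_mul_self, one_smul]

lemma zsmul_eq_sgnC_smul (σ : Equiv.Perm (Fin n)) (f : Rn n) :
    (Equiv.Perm.sign σ : ℤ) • f = sgnC σ • f :=
  (Int.cast_smul_eq_zsmul ℂ _ f).symm

lemma permR_permR (σ τ : Equiv.Perm (Fin n)) (f : Rn n) :
    permR n σ (permR n τ f) = permR n (σ * τ) f := by
  show rename _ (rename _ f) = rename _ f
  rw [rename_rename]
  have h : (Sum.map ⇑σ ⇑σ ∘ Sum.map ⇑τ ⇑τ) = Sum.map ⇑(σ * τ) ⇑(σ * τ) := by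
    funext x; cases x <;> rfl
  rw [h]

lemma factC_ne (n : ℕ) : ((n.factorial : ℂ)) ≠ 0 :=
  Nat.cast_ne_zero.mpr (Nat.factorial_ne_zero n)

lemma sum_const_perm (u : Rn n) :
    ∑ _σ : Equiv.Perm (Fin n), u = (n.factorial : ℂ) • u := by
  rw [Finset.sum_const, Finset.card_univ, Fintype.card_perm, Fintype.card_fin]
  exact (Nat.cast_smul_eq_nsmul ℂ _ _).symm

lemma inv_fact_smul (u : Rn n) :
    (n.factorial : ℂ)⁻¹ • (n.factorial : ℂ) • u = u := by
  rw [smul_smul, inv_mul_cancel₀ (factC_ne n), one_smul]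

/-- The symmetrization operator. -/
noncomputable def symA (n : ℕ) : Rn n →ₗ[ℂ] Rn n :=
  (n.factorial : ℂ)⁻¹ • ∑ σ : Equiv.Perm (Fin n), (permR n σ).toLinearMap

/-- The antisymmetrization operator. -/
noncomputable def antiA (n : ℕ) : Rn n →ₗ[ℂ] Rn n :=
  (n.factorial : ℂ)⁻¹ • ∑ σ : Equiv.Perm (Fin n), sgnC σ • (permR n σ).toLinearMap

lemma symA_apply (u : Rn n) :
    symA n u = (n.factorial : ℂ)⁻¹ • ∑ σ : Equiv.Perm (Fin n), permR n σ u := by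
  simp [symA]

lemma antiA_apply (u : Rn n) :
    antiA n u = (n.factorial : ℂ)⁻¹ • ∑ σ : Equiv.Perm (Fin n), sgnC σ • permR n σ u := by
  simp [antiA]

lemma permR_symA (σ : Equiv.Perm (Fin n)) (p : Rn n) :
    permR n σ (symA n p) = symA n p := by
  rw [symA_apply, map_smul, map_sum]
  congr 1
  refine Fintype.sum_equiv (Equiv.mulLeft σ) _ _ (fun τ => ?_)
  rw [permR_permR]
  rfl

lemma symA_isSym (p : Rn n) : IsSymP (symA n p) := fun σ => permR_symA σ p

lemma permR_antiA (σ : Equiv.Perm (Fin n)) (p : Rn n) :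
    permR n σ (antiA n p) = sgnC σ • antiA n p := by
  rw [antiA_apply, map_smul, map_sum,
    smul_comm (sgnC σ) ((n.factorial : ℂ)⁻¹)]
  congr 1
  rw [Finset.smul_sum]
  refine Fintype.sum_equiv (Equiv.mulLeft σ) _ _ (fun τ => ?_)
  rw [map_smul, permR_permR]
  show sgnC τ • permR n (σ * τ) p = sgnC σ • sgnC (σ * τ) • permR n (σ * τ) p
  rw [smul_smul, sgnC_mul, ← mul_assoc, sgnC_mul_self, one_mul]

lemma antiA_isAntiSym (p : Rn n) : IsAntiSymP (antiA n p) := fun σ => by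
  rw [permR_antiA, zsmul_eq_sgnC_smul]

lemma antiA_of_antiSym {f : Rn n} (hf : IsAntiSymP f) : antiA n f = f := by
  rw [antiA_apply]
  have : ∀ σ : Equiv.Perm (Fin n), sgnC σ • permR n σ f = f := fun σ => by
    rw [hf σ, zsmul_eq_sgnC_smul, sgnC_smul_smul]
  rw [Finset.sum_congr rfl (fun σ _ => this σ), sum_const_perm, inv_fact_smul]

lemma antiA_mul_antiSym {f : Rn n} (hf : IsAntiSymP f) (r : Rn n) :
    antiA n (r * f) = symA n r * f := by
  rw [antiA_apply, symA_apply, smul_mul_assoc, Finset.sum_mul]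
  congr 1
  refine Finset.sum_congr rfl (fun σ _ => ?_)
  rw [map_mul, hf σ, zsmul_eq_sgnC_smul, mul_smul_comm, sgnC_smul_smul]

lemma antiA_mul_sym {s : Rn n} (hs : IsSymP s) (r : Rn n) :
    antiA n (r * s) = antiA n r * s := by
  rw [antiA_apply, antiA_apply, smul_mul_assoc, Finset.sum_mul]
  congr 1
  refine Finset.sum_congr rfl (fun σ _ => ?_)
  rw [map_mul, hs σ, smul_mul_assoc]

lemma constantCoeff_permR (σ : Equiv.Perm (Fin n)) (p : Rn n) :
    constantCoeff (permR n σ p) = constantCoeff p :=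
  constantCoeff_rename _ p

lemma constantCoeff_smulC (c : ℂ) (p : Rn n) :
    constantCoeff (c • p) = c • constantCoeff p := by
  rw [smul_eq_C_mul, map_mul, constantCoeff_C, smul_eq_mul]

lemma constantCoeff_symA (p : Rn n) :
    constantCoeff (symA n p) = constantCoeff p := by
  rw [symA_apply, constantCoeff_smulC, map_sum,
    Finset.sum_congr rfl (fun σ _ => constantCoeff_permR σ p),
    Finset.sum_const, Finset.card_univ, Fintype.card_perm, Fintype.card_fin,
    nsmul_eq_mul, smul_eq_mul, ← mul_assoc, inv_mul_cancel₀ (factC_ne n), one_mul]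

lemma mem_mId_iff {p : Rn n} : p ∈ mId n ↔ constantCoeff p = 0 := by
  rw [mId, ← Set.image_univ, mem_ideal_span_X_image]
  constructor
  · intro h
    by_contra h0
    have h0' : (0 : (Fin n ⊕ Fin n) →₀ ℕ) ∈ p.support := by
      rwa [MvPolynomial.mem_support_iff]
    obtain ⟨i, _, hi⟩ := h _ h0'
    exact hi rfl
  · intro h0 m hm
    have hm0 : m ≠ 0 := by
      rintro rfl
      exact (MvPolynomial.mem_support_iff.mp hm) h0
    obtain ⟨i, hi⟩ := Finsupp.ne_iff.mp hm0
    exact ⟨i, Set.mem_univ i, by simpa using hi⟩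

lemma BiHom_permR {f : Rn n} {d : ℕ × ℕ} (σ : Equiv.Perm (Fin n)) (h : BiHom n f d) :
    BiHom n (permR n σ f) d := by
  intro m hm
  obtain ⟨u, rfl, hu⟩ := coeff_rename_ne_zero _ _ _ hm
  have hw : Finsupp.weight (wtB n) (Finsupp.mapDomain (Sum.map ⇑σ ⇑σ) u)
      = Finsupp.weight (wtB n) u := by
    have e1 : ∀ v : (Fin n ⊕ Fin n) →₀ ℕ,
        Finsupp.weight (wtB n) v = Finsupp.linearCombination ℕ (wtB n) v := fun _ => rfl
    rw [e1, e1, Finsupp.linearCombination_mapDomain]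
    have h2 : wtB n ∘ Sum.map ⇑σ ⇑σ = wtB n := by funext x; cases x <;> rfl
    rw [h2]
  rw [hw]
  exact h hu

lemma BiHom_smul {f : Rn n} {d : ℕ × ℕ} (c : ℂ) (h : BiHom n f d) :
    BiHom n (c • f) d := by
  intro m hm
  rw [MvPolynomial.coeff_smul] at hm
  exact h (fun h0 => hm (by rw [h0, smul_zero]))

lemma BiHom_antiA {f : Rn n} {d : ℕ × ℕ} (h : BiHom n f d) :
    BiHom n (antiA n f) d := by
  rw [antiA_apply]
  exact BiHom_smul _ (MvPolynomial.IsWeightedHomogeneous.sum _ _ _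
    (fun σ _ => BiHom_smul _ (BiHom_permR σ h)))

lemma Iplus_smulC {x : Rn n} (c : ℂ) (hx : x ∈ Iplus n) : c • x ∈ Iplus n := by
  rw [smul_eq_C_mul]
  exact Ideal.mul_mem_left _ _ hx

lemma sub_antiA_mem {u : Rn n} (hu : u ∈ Jid n) :
    ∀ r : Rn n, r * u - antiA n (r * u) ∈ mId n * Jid n := by
  induction hu using Submodule.span_induction with
  | mem f hf =>
    intro r
    rw [antiA_mul_antiSym hf, ← sub_mul]
    have h1 : r - symA n r ∈ mId n := by
      rw [mem_mId_iff, map_sub, constantCoeff_symA, sub_self]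
    exact Submodule.mul_mem_mul h1 (Ideal.subset_span hf)
  | zero => intro r; simp
  | add x y hx hy ihx ihy =>
    intro r
    have : r * (x + y) - antiA n (r * (x + y))
        = (r * x - antiA n (r * x)) + (r * y - antiA n (r * y)) := by
      rw [mul_add, map_add]; ring
    rw [this]
    exact add_mem (ihx r) (ihy r)
  | smul a x hx ihx =>
    intro r
    have : r * (a • x) = (r * a) * x := by rw [smul_eq_mul, mul_assoc]
    rw [this]
    exact ihx (r * a)

lemma antiA_mul_J_mem {b : Rn n} (hb : b ∈ Jid n) :
    ∀ p ∈ mId n, antiA n (p * b) ∈ Iplus n := by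
  induction hb using Submodule.span_induction with
  | mem f hf =>
    intro p hp
    rw [antiA_mul_antiSym hf]
    refine Ideal.mul_mem_right f _ (Ideal.subset_span ⟨symA_isSym p, ?_⟩)
    rw [constantCoeff_symA]
    exact mem_mId_iff.mp hp
  | zero => intro p hp; rw [mul_zero, map_zero]; exact zero_mem _
  | add x y hx hy ihx ihy =>
    intro p hp
    rw [mul_add, map_add]
    exact add_mem (ihx p hp) (ihy p hp)
  | smul r x hx ihx =>
    intro p hp
    have : p * (r • x) = (p * r) * x := by rw [smul_eq_mul, mul_assoc]
    rw [this]
    exact ihx (p * r) (Ideal.mul_mem_right r _ hp)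

lemma antiA_mulJ_mem {u : Rn n} (hu : u ∈ mId n * Jid n) : antiA n u ∈ Iplus n :=
  Submodule.mul_induction_on hu (fun a ha b hb => antiA_mul_J_mem hb a ha)
    (fun x y hx hy => by rw [map_add]; exact add_mem hx hy)

lemma antiA_Iplus_mem {u : Rn n} (hu : u ∈ Iplus n) :
    ∀ r : Rn n, antiA n (r * u) ∈ mId n * Jid n := by
  induction hu using Submodule.span_induction with
  | mem s hs =>
    intro r
    rw [antiA_mul_sym hs.1, mul_comm (antiA n r) s]
    exact Submodule.mul_mem_mul (mem_mId_iff.mpr hs.2) (Ideal.subset_span (antiA_isAntiSym r))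
  | zero => intro r; rw [mul_zero, map_zero]; exact zero_mem _
  | add x y hx hy ihx ihy =>
    intro r
    rw [mul_add, map_add]
    exact add_mem (ihx r) (ihy r)
  | smul a x hx ihx =>
    intro r
    have : r * (a • x) = (r * a) * x := by rw [smul_eq_mul, mul_assoc]
    rw [this]
    exact ihx (r * a)

end AuxAnti

theorem stmt5 (n : ℕ) (hn : 1 ≤ n) :
    -- the map `A → J/mJ` (from antisymmetric polynomials) is surjective …
    (∀ u ∈ Jid n, ∃ g : Rn n, IsAntiSymP g ∧ u - g ∈ mId n * Jid n) ∧
    -- … respecting the bigrading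
    (∀ (d : ℕ × ℕ), ∀ u ∈ Jid n, BiHom n u d →
      ∃ g : Rn n, IsAntiSymP g ∧ BiHom n g d ∧ u - g ∈ mId n * Jid n) ∧
    -- the map `A → DR_n` lands in `(DR_n)^sgn` …
    (∀ g : Rn n, IsAntiSymP g →
      ∀ σ : Equiv.Perm (Fin n), permR n σ g - (Equiv.Perm.sign σ : ℤ) • g ∈ Iplus n) ∧
    -- … and is surjective onto `(DR_n)^sgn` …
    (∀ u : Rn n,
      (∀ σ : Equiv.Perm (Fin n), permR n σ u - (Equiv.Perm.sign σ : ℤ) • u ∈ Iplus n) →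
      ∃ g : Rn n, IsAntiSymP g ∧ u - g ∈ Iplus n) ∧
    -- … respecting the bigrading
    (∀ (d : ℕ × ℕ), ∀ u : Rn n,
      (∀ σ : Equiv.Perm (Fin n), permR n σ u - (Equiv.Perm.sign σ : ℤ) • u ∈ Iplus n) →
      BiHom n u d →
      ∃ g : Rn n, IsAntiSymP g ∧ BiHom n g d ∧ u - g ∈ Iplus n) ∧
    -- the kernels of the two maps coincide: `A ∩ mJ = A ∩ I_+`; consequently
    -- `[g mod mJ] ↦ [g mod I_+]` is a well-defined isomorphism of bigraded vector
    -- spaces `J/mJ ≅ (DR_n)^sgn`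
    (∀ g : Rn n, IsAntiSymP g → (g ∈ mId n * Jid n ↔ g ∈ Iplus n)) := by
  have key : ∀ u : Rn n,
      (∀ σ : Equiv.Perm (Fin n), permR n σ u - (Equiv.Perm.sign σ : ℤ) • u ∈ Iplus n) →
      u - antiA n u ∈ Iplus n := by
    intro u hu
    have h1 : antiA n u - u =
        (n.factorial : ℂ)⁻¹ • ∑ σ : Equiv.Perm (Fin n),
          sgnC σ • (permR n σ u - sgnC σ • u) := by
      have h2 : ∀ σ : Equiv.Perm (Fin n),
          sgnC σ • (permR n σ u - sgnC σ • u) = sgnC σ • permR n σ u - u := by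
        intro σ; rw [smul_sub, sgnC_smul_smul]
      rw [Finset.sum_congr rfl (fun σ _ => h2 σ), Finset.sum_sub_distrib,
        sum_const_perm, smul_sub, inv_fact_smul, antiA_apply]
    have h3 : antiA n u - u ∈ Iplus n := by
      rw [h1]
      refine Iplus_smulC _ (Ideal.sum_mem _ (fun σ _ => ?_))
      refine Iplus_smulC _ ?_
      rw [← zsmul_eq_sgnC_smul]
      exact hu σ
    simpa using neg_mem h3
  refine ⟨?_, ?_, ?_, ?_, ?_, ?_⟩
  · intro u hu
    exact ⟨antiA n u, antiA_isAntiSym u, by simpa using sub_antiA_mem hu 1⟩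
  · intro d u hu hb
    exact ⟨antiA n u, antiA_isAntiSym u, BiHom_antiA hb,
      by simpa using sub_antiA_mem hu 1⟩
  · intro g hg σ
    rw [hg σ, sub_self]; exact zero_mem _
  · intro u hu
    exact ⟨antiA n u, antiA_isAntiSym u, key u hu⟩
  · intro d u hu hb
    exact ⟨antiA n u, antiA_isAntiSym u, BiHom_antiA hb, key u hu⟩
  · intro g hg
    constructor
    · intro h
      have h2 := antiA_mulJ_mem h
      rwa [antiA_of_antiSym hg] at h2
    · intro h
      have h2 := antiA_Iplus_mem h 1
      rwa [one_mul, antiA_of_antiSym hg] at h2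
end

section
/- For every k ≥ 1 the operators E_k and F_k preserve both the ideal J and the product ideal mJ: E_k(J) ⊆ J, F_k(J) ⊆ J, E_k(mJ) ⊆ mJ, and F_k(mJ) ⊆ mJ. Consequently E_k and F_k induce well-defined operators on the quotient J/mJ. -/
open MvPolynomial

/-!
`E_k` and `F_k` are derivations of `R` commuting with the diagonal `S_n`-action, so they map
antisymmetric polynomials to antisymmetric polynomials, and by the Leibniz rule a derivation
sending the generators of an ideal into it preserves the ideal: this gives `J`. For `k ≥ 1` they
send every variable into `m`, so they preserve `m`, and a derivation preserving two ideals
preserves their product.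
-/

namespace Derivation

variable {R A : Type*} [CommSemiring R] [CommRing A] [Algebra R A] (D : Derivation R A A)

theorem map_mem_span_of_forall_mem {S : Set A} (hS : ∀ s ∈ S, D s ∈ Ideal.span S) :
    ∀ f ∈ Ideal.span S, D f ∈ Ideal.span S := by
  intro f hf
  induction hf using Submodule.span_induction with
  | mem s hs => exact hS s hs
  | zero => simp
  | add x y _ _ hx hy => simpa using add_mem hx hy
  | smul a x hx hDx =>
    rw [smul_eq_mul, leibniz, smul_eq_mul, smul_eq_mul]
    exact add_mem (Ideal.mul_mem_left _ a hDx) (Ideal.mul_mem_right _ _ hx)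

theorem map_mem_mul {I K : Ideal A} (hI : ∀ f ∈ I, D f ∈ I) (hK : ∀ f ∈ K, D f ∈ K) {f : A}
    (hf : f ∈ I * K) : D f ∈ I * K := by
  refine Submodule.mul_induction_on hf (fun p hp q hq => ?_) fun x y hx hy => ?_
  · rw [leibniz, smul_eq_mul, smul_eq_mul, mul_comm q]
    exact add_mem (Ideal.mul_mem_mul hp (hK q hq)) (Ideal.mul_mem_mul (hI p hp) hq)
  · simpa using add_mem hx hy

end Derivation

section Polarization

variable {n : ℕ}

/-- `Σ_i X(u i)^k ∂/∂X(v i)`; `E_k` and `F_k` are the cases `(u, v) = (y, x)` and `(x, y)`. -/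
noncomputable def polarization (u v : Fin n → Fin n ⊕ Fin n) (k : ℕ) :
    Derivation ℂ (Rn n) (Rn n) :=
  ∑ i, (X (u i) : Rn n) ^ k • pderiv (v i)

theorem polarization_apply (u v : Fin n → Fin n ⊕ Fin n) (k : ℕ) (f : Rn n) :
    polarization u v k f = ∑ i, X (u i) ^ k * pderiv (v i) f := by
  rw [polarization, ← Derivation.coeFnAddMonoidHom_apply, map_sum, Finset.sum_apply]
  simp

theorem Eop_apply (k : ℕ) (f : Rn n) : Eop n k f = polarization Sum.inr Sum.inl k f := by
  simp [Eop, polarization_apply]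

theorem Fop_apply (k : ℕ) (f : Rn n) : Fop n k f = polarization Sum.inl Sum.inr k f := by
  simp [Fop, polarization_apply]

def IsDiagEquivariant (u : Fin n → Fin n ⊕ Fin n) : Prop :=
  ∀ (σ : Equiv.Perm (Fin n)) i, Sum.map σ σ (u i) = u (σ i)

theorem isDiagEquivariant_inl : IsDiagEquivariant (n := n) Sum.inl := fun _ _ => rfl

theorem isDiagEquivariant_inr : IsDiagEquivariant (n := n) Sum.inr := fun _ _ => rfl

theorem permR_polarization {u v : Fin n → Fin n ⊕ Fin n}
    (hu : IsDiagEquivariant u) (hv : IsDiagEquivariant v)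
    (k : ℕ) (σ : Equiv.Perm (Fin n)) (f : Rn n) :
    permR n σ (polarization u v k f) = polarization u v k (permR n σ f) := by
  have hinj : Function.Injective (Sum.map σ σ) := σ.injective.sumMap σ.injective
  rw [polarization_apply, polarization_apply, map_sum,
    ← Equiv.sum_comp σ (fun i => X (u i) ^ k * pderiv (v i) (permR n σ f))]
  refine Finset.sum_congr rfl fun i _ => ?_
  rw [permR, map_mul, map_pow, rename_X, hu, ← hv, pderiv_rename hinj]

theorem IsAntiSymP.polarization {u v : Fin n → Fin n ⊕ Fin n}
    (hu : IsDiagEquivariant u) (hv : IsDiagEquivariant v)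
    (k : ℕ) {f : Rn n} (hf : IsAntiSymP f) : IsAntiSymP (polarization u v k f) := fun σ => by
  rw [permR_polarization hu hv, hf σ, map_zsmul]

theorem polarization_mem_Jid {u v : Fin n → Fin n ⊕ Fin n}
    (hu : IsDiagEquivariant u) (hv : IsDiagEquivariant v)
    (k : ℕ) : ∀ f ∈ Jid n, polarization u v k f ∈ Jid n :=
  (polarization u v k).map_mem_span_of_forall_mem
    fun _ hs => Ideal.subset_span (hs.polarization hu hv k)

theorem polarization_mem_mId (u v : Fin n → Fin n ⊕ Fin n) {k : ℕ} (hk : 1 ≤ k) :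
    ∀ f ∈ mId n, polarization u v k f ∈ mId n := by
  refine (polarization u v k).map_mem_span_of_forall_mem ?_
  rintro _ ⟨w, rfl⟩
  rw [polarization_apply]
  exact Ideal.sum_mem _ fun i _ => Ideal.mul_mem_right _ _ <|
    Ideal.pow_mem_of_mem _ (Ideal.subset_span (Set.mem_range_self (u i))) k hk

end Polarization

theorem stmt7_general (n : ℕ) :
    ∀ k : ℕ, 1 ≤ k →
      (∀ f ∈ Jid n, Eop n k f ∈ Jid n ∧ Fop n k f ∈ Jid n) ∧
      (∀ f ∈ mId n * Jid n, Eop n k f ∈ mId n * Jid n ∧ Fop n k f ∈ mId n * Jid n) := by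
  intro k hk
  have hE := polarization_mem_Jid (n := n) isDiagEquivariant_inr isDiagEquivariant_inl k
  have hF := polarization_mem_Jid (n := n) isDiagEquivariant_inl isDiagEquivariant_inr k
  simp only [Eop_apply, Fop_apply]
  exact ⟨fun f hf => ⟨hE f hf, hF f hf⟩, fun f hf =>
    ⟨Derivation.map_mem_mul _ (polarization_mem_mId _ _ hk) hE hf,
      Derivation.map_mem_mul _ (polarization_mem_mId _ _ hk) hF hf⟩⟩

theorem stmt7 (n : ℕ) (hn : 1 ≤ n) :
    ∀ k : ℕ, 1 ≤ k →
      (∀ f ∈ Jid n, Eop n k f ∈ Jid n ∧ Fop n k f ∈ Jid n) ∧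
      (∀ f ∈ mId n * Jid n, Eop n k f ∈ mId n * Jid n ∧ Fop n k f ∈ mId n * Jid n) :=
  stmt7_general n
end

section
/- Let M = ⊕_{d≥0} M_d be a finitely generated ℕ-graded module over ℂ[x,y] (with x and y of degree 1), equipped with two ℂ-linear operators D_x, D_y : M → M of degree −1 such that D_x D_y = D_y D_x and, for all f ∈ ℂ[x,y] and m ∈ M, D_x(f·m) = (∂f/∂x)·m + f·D_x(m) and D_y(f·m) = (∂f/∂y)·m + f·D_y(m). Set M̄ = ker(D_x) ∩ ker(D_y). Then the multiplication map M̄ ⊗_ℂ ℂ[x,y] → M is an isomorphism of ℂ[x,y]-modules; in particular M is a free ℂ[x,y]-module and M̄ is a finite-dimensional ℂ-vector space. -/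
open MvPolynomial TensorProduct

/-- The multiplication map `ℂ[x,y] ⊗_ℂ K → M`, `f ⊗ m ↦ f·m`, for a `ℂ`-subspace `K`
of a `ℂ[x,y]`-module `M`. -/
noncomputable def mulMap (M : Type*) [AddCommGroup M] [Module ℂ M] [Module P2 M]
    [IsScalarTower ℂ P2 M] (K : Submodule ℂ M) : P2 ⊗[ℂ] K →ₗ[P2] M :=
  LinearMap.liftBaseChange P2 K.subtype

/-!
The key operator is the truncated Taylor expansion at the origin,
`T = Σ_{i,j} (-x)^i (-y)^j / (i! j!) · D_x^i D_y^j = exp(-x D_x) exp(-y D_y)`.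
Applying `D_x` to `exp(-x D_x) m` telescopes to a multiple of `D_x^N m`, and `exp(-x D_x)`
commutes with `D_y`; so `T` maps `M` into `M̄ = ker D_x ∩ ker D_y`, since `D_x`, `D_y` are
nilpotent on each `M_d`. Moreover `T (f • m̄) = f(0) • m̄` for `m̄ ∈ M̄`.

Surjectivity: `m - T m` is a `ℂ[x,y]`-combination of derivatives of `m`, which have lower
degree, so by induction on the degree every `m` lies in the `ℂ[x,y]`-span of `M̄`.
Injectivity: applying `T ∘ D_x^a D_y^b` to `Σ_u x^{u₀} y^{u₁} • m̄_u` returns `a! b! • m̄_{(a,b)}`.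
Finally `M̄` is finite dimensional because `ℂ[x,y] ⊗ M̄ ≅ M` is finite over the faithfully flat
`ℂ`-algebra `ℂ[x,y]`.
-/

open Finset
open scoped Nat

theorem neg_one_pow_succ_div_factorial_mul {K : Type*} [Field K] [CharZero K] (i : ℕ) :
    (-1 : K) ^ (i + 1) / (i + 1)! * (i + 1 : ℕ) = -((-1) ^ i / i !) := by
  rw [Nat.factorial_succ]
  push_cast
  field_simp
  ring

theorem monomial_one_fin_two {K : Type*} [CommSemiring K] (u : Fin 2 →₀ ℕ) :
    monomial u (1 : K) = X 0 ^ u 0 * X 1 ^ u 1 := by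
  rw [monomial_eq, C_1, one_mul, Finsupp.prod_fintype _ _ fun _ => pow_zero _, Fin.prod_univ_two]

theorem pow_succ_apply_eq_zero_of_mem {R M : Type*} [Semiring R] [AddCommMonoid M] [Module R M]
    {g : ℕ → Submodule R M} {D : Module.End R M} (h0 : ∀ m ∈ g 0, D m = 0)
    (hdeg : ∀ d : ℕ, ∀ m ∈ g (d + 1), D m ∈ g d) {d : ℕ} {m : M} (hm : m ∈ g d) :
    (D ^ (d + 1)) m = 0 := by
  induction d generalizing m with
  | zero => simpa using h0 m hm
  | succ d ih => rw [pow_succ, Module.End.mul_apply]; exact ih (hdeg d m hm)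

section OneVariable

variable {K σ M : Type*} [Field K] [AddCommGroup M] [Module K M]
  [Module (MvPolynomial σ K) M] [IsScalarTower K (MvPolynomial σ K) M]

def IsLeibniz (k : σ) (D : Module.End K M) : Prop :=
  ∀ (f : MvPolynomial σ K) (m : M), D (f • m) = pderiv k f • m + f • D m

/-- `exp (-X k • D)`, truncated after `N` terms: the Taylor expansion at `X k = 0`. -/
noncomputable def taylorProj (k : σ) (D : Module.End K M) (N : ℕ) : Module.End K M :=
  ∑ i ∈ range N,
    ((-1 : K) ^ i / i !) • (Algebra.lsmul K K M ((X k : MvPolynomial σ K) ^ i) * D ^ i)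

theorem taylorProj_apply (k : σ) (D : Module.End K M) (N : ℕ) (m : M) :
    taylorProj k D N m =
      ∑ i ∈ range N, ((-1 : K) ^ i / i !) • ((X k : MvPolynomial σ K) ^ i • (D ^ i) m) := by
  simp only [taylorProj, LinearMap.sum_apply, LinearMap.smul_apply, Module.End.mul_apply,
    Algebra.lsmul_coe]

theorem commute_taylorProj {E D : Module.End K M} {k : σ}
    (hX : ∀ i, Commute E (Algebra.lsmul K K M ((X k : MvPolynomial σ K) ^ i))) (hD : Commute E D)
    (N : ℕ) : Commute E (taylorProj k D N) :=
  .sum_right _ _ _ fun i _ => ((hX i).mul_right (hD.pow_right i)).smul_right _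

section Invariant

variable {R : Submodule (MvPolynomial σ K) M} {D : Module.End K M} (hR : ∀ m ∈ R, D m ∈ R)
include hR

omit [IsScalarTower K (MvPolynomial σ K) M] in
theorem pow_apply_mem_of_forall_mem (i : ℕ) {m : M} (hm : m ∈ R) : (D ^ i) m ∈ R := by
  induction i with
  | zero => exact hm
  | succ i ih => rw [pow_succ', Module.End.mul_apply]; exact hR _ ih

theorem taylorProj_mem (k : σ) (N : ℕ) {m : M} (hm : m ∈ R) : taylorProj k D N m ∈ R := by
  rw [taylorProj_apply]
  exact R.sum_mem fun i _ =>
    R.smul_of_tower_mem _ (R.smul_mem _ (pow_apply_mem_of_forall_mem hR i hm))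

theorem taylorProj_succ_sub_mem (k : σ) (N : ℕ) {m : M} (hm : D m ∈ R) :
    taylorProj k D (N + 1) m - m ∈ R := by
  rw [taylorProj_apply, sum_range_succ']
  simp only [pow_zero, Module.End.one_apply, one_smul, Nat.factorial_zero, Nat.cast_one, div_one,
    add_sub_cancel_right]
  refine R.sum_mem fun i _ => R.smul_of_tower_mem _ (R.smul_mem _ ?_)
  rw [pow_succ, Module.End.mul_apply]
  exact pow_apply_mem_of_forall_mem hR i hm

end Invariant

namespace IsLeibniz

variable {k : σ} {D : Module.End K M}

omit [IsScalarTower K (MvPolynomial σ K) M] in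
theorem map_X_pow_smul_of_ne {l : σ} (hD : IsLeibniz k D) (hlk : l ≠ k) (a : ℕ) (m : M) :
    D ((X l : MvPolynomial σ K) ^ a • m) = (X l : MvPolynomial σ K) ^ a • D m := by
  rw [hD, pderiv_pow, pderiv_X_of_ne hlk, mul_zero, zero_smul, zero_add]

theorem commute_lsmul_X_pow {l : σ} (hD : IsLeibniz k D) (hlk : l ≠ k) (a : ℕ) :
    Commute D (Algebra.lsmul K K M ((X l : MvPolynomial σ K) ^ a)) :=
  LinearMap.ext (hD.map_X_pow_smul_of_ne hlk a)

theorem pow_apply_X_pow_smul_of_ne {l : σ} (hD : IsLeibniz k D) (hlk : l ≠ k) (i a : ℕ)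
    (m : M) :
    (D ^ i) ((X l : MvPolynomial σ K) ^ a • m) = (X l : MvPolynomial σ K) ^ a • (D ^ i) m :=
  LinearMap.congr_fun ((hD.commute_lsmul_X_pow hlk a).pow_left i).eq m

theorem commute_taylorProj_of_ne {l : σ} {E : Module.End K M} (hE : IsLeibniz l E)
    (hED : Commute E D) (hkl : k ≠ l) (N : ℕ) : Commute E (taylorProj k D N) :=
  commute_taylorProj (hE.commute_lsmul_X_pow hkl) hED N

omit [IsScalarTower K (MvPolynomial σ K) M] in
theorem pow_apply_X_pow_smul (hD : IsLeibniz k D) {w : M} (hw : D w = 0) (i a : ℕ) :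
    (D ^ i) ((X k : MvPolynomial σ K) ^ a • w) =
      (a.descFactorial i : K) • ((X k : MvPolynomial σ K) ^ (a - i) • w) := by
  induction i with
  | zero => simp
  | succ i ih =>
    rw [pow_succ', Module.End.mul_apply, ih, map_smul, hD, hw, smul_zero, add_zero, pderiv_pow,
      pderiv_X_self, mul_one, Nat.descFactorial_succ, ← Nat.sub_sub, Nat.cast_mul, mul_smul,
      mul_smul]
    simp only [Nat.cast_smul_eq_nsmul]
    exact smul_comm _ _ _

theorem apply_taylorProj_eq_zero [CharZero K] (hD : IsLeibniz k D) {N : ℕ} {m : M}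
    (hm : (D ^ N) m = 0) : D (taylorProj k D N m) = 0 := by
  obtain _ | n := N
  · simp [taylorProj]
  set v : ℕ → M := fun i =>
    ((-1 : K) ^ i / i !) • ((X k : MvPolynomial σ K) ^ i • (D ^ (i + 1)) m)
  have hterm : ∀ i, D (((-1 : K) ^ (i + 1) / (i + 1)!) •
      ((X k : MvPolynomial σ K) ^ (i + 1) • (D ^ (i + 1)) m)) = v (i + 1) - v i := by
    intro i
    rw [map_smul, hD, pderiv_pow, pderiv_X_self, mul_one, Nat.add_sub_cancel, smul_add,
      ← Module.End.mul_apply, ← pow_succ', mul_smul, Nat.cast_smul_eq_nsmul,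
      ← Nat.cast_smul_eq_nsmul K, smul_smul, neg_one_pow_succ_div_factorial_mul, neg_smul,
      neg_add_eq_sub]
  rw [taylorProj_apply, map_sum, sum_range_succ', sum_congr rfl fun i _ => hterm i,
    sum_range_sub]
  simp [v, hm]

theorem taylorProj_X_pow_smul [CharZero K] (hD : IsLeibniz k D) {w : M} (hw : D w = 0)
    {a N : ℕ} (ha : a < N) :
    taylorProj k D N ((X k : MvPolynomial σ K) ^ a • w) = if a = 0 then w else 0 := by
  have hterm : ∀ i, ((-1 : K) ^ i / i !) • ((X k : MvPolynomial σ K) ^ i •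
      (D ^ i) ((X k : MvPolynomial σ K) ^ a • w)) =
      ((-1 : K) ^ i * a.choose i) • ((X k : MvPolynomial σ K) ^ a • w) := by
    intro i
    rw [hD.pow_apply_X_pow_smul hw, smul_comm ((X k : MvPolynomial σ K) ^ i), smul_smul,
      smul_smul ((X k : MvPolynomial σ K) ^ i), ← pow_add]
    rcases le_or_gt i a with hia | hai
    · rw [Nat.add_sub_cancel' hia, Nat.descFactorial_eq_factorial_mul_choose]
      push_cast
      rw [← mul_assoc, div_mul_cancel₀ _ (Nat.cast_ne_zero.2 i.factorial_ne_zero)]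
    · rw [Nat.choose_eq_zero_of_lt hai, Nat.descFactorial_eq_zero_iff_lt.mpr hai]
      simp
  have hsum : ∑ i ∈ range N, (-1 : K) ^ i * a.choose i = if a = 0 then 1 else 0 := by
    have := add_pow (-1 : K) 1 a
    simp only [one_pow, mul_one, neg_add_cancel, zero_pow_eq] at this
    rw [← sum_subset (range_subset_range.2 ha) fun i _ hi => by
      rw [Nat.choose_eq_zero_of_lt (by simpa using hi), Nat.cast_zero, mul_zero], ← this]
  rw [taylorProj_apply, sum_congr rfl fun i _ => hterm i, ← sum_smul, hsum]
  split_ifs with h <;> simp [h]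

omit [IsScalarTower K (MvPolynomial σ K) M] in
theorem apply_mem_span (hD : IsLeibniz k D) {s : Set M} (hs : ∀ m ∈ s, D m = 0) {m : M}
    (hm : m ∈ Submodule.span (MvPolynomial σ K) s) :
    D m ∈ Submodule.span (MvPolynomial σ K) s := by
  induction hm using Submodule.span_induction with
  | mem m hm => rw [hs m hm]; exact zero_mem _
  | zero => rw [map_zero]; exact zero_mem _
  | add m n _ _ hm hn => rw [map_add]; exact add_mem hm hn
  | smul f m hm hDm =>
    rw [hD]
    exact add_mem (Submodule.smul_mem _ _ hm) (Submodule.smul_mem _ _ hDm)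

end IsLeibniz

end OneVariable

section TwoVariables

variable {K M : Type*} [Field K] [AddCommGroup M] [Module K M]
  [Module (MvPolynomial (Fin 2) K) M] [IsScalarTower K (MvPolynomial (Fin 2) K) M]
  {Dx Dy : Module.End K M}

noncomputable def taylorProj₂ (Dx Dy : Module.End K M) (N : ℕ) : Module.End K M :=
  taylorProj (0 : Fin 2) Dx N * taylorProj (1 : Fin 2) Dy N

variable (hDx : IsLeibniz (0 : Fin 2) Dx) (hDy : IsLeibniz (1 : Fin 2) Dy)
include hDx hDy

theorem taylorProj₂_mem_ker [CharZero K] (hcomm : Commute Dx Dy) {N : ℕ} {m : M}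
    (hx : (Dx ^ N) m = 0) (hy : (Dy ^ N) m = 0) :
    taylorProj₂ Dx Dy N m ∈ LinearMap.ker Dx ⊓ LinearMap.ker Dy := by
  have hxy := hDx.commute_taylorProj_of_ne hcomm one_ne_zero N
  have hyx : ∀ v, Dy (taylorProj (0 : Fin 2) Dx N v) = taylorProj (0 : Fin 2) Dx N (Dy v) :=
    LinearMap.congr_fun (hDy.commute_taylorProj_of_ne hcomm.symm zero_ne_one N).eq
  refine ⟨hDx.apply_taylorProj_eq_zero ?_, ?_⟩
  · rw [← Module.End.mul_apply, (hxy.pow_left N).eq, Module.End.mul_apply, hx, map_zero]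
  · change Dy (taylorProj (0 : Fin 2) Dx N (taylorProj (1 : Fin 2) Dy N m)) = 0
    rw [hyx, hDy.apply_taylorProj_eq_zero hy, map_zero]

theorem pow_pow_monomial_smul {mb : M} (hmb : mb ∈ LinearMap.ker Dx ⊓ LinearMap.ker Dy)
    (i j a b : ℕ) :
    (Dx ^ i) ((Dy ^ j) (((X 0 : MvPolynomial (Fin 2) K) ^ a * X 1 ^ b) • mb)) =
      ((a.descFactorial i * b.descFactorial j : ℕ) : K) •
        (((X 0 : MvPolynomial (Fin 2) K) ^ (a - i) * X 1 ^ (b - j)) • mb) := by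
  obtain ⟨hx, hy⟩ := hmb
  have hx' : Dx ((X 1 : MvPolynomial (Fin 2) K) ^ (b - j) • mb) = 0 := by
    rw [hDx.map_X_pow_smul_of_ne one_ne_zero, hx, smul_zero]
  rw [mul_smul, hDy.pow_apply_X_pow_smul_of_ne zero_ne_one, hDy.pow_apply_X_pow_smul hy,
    smul_comm, map_smul, hDx.pow_apply_X_pow_smul hx', Nat.cast_mul, mul_comm, mul_smul,
    mul_smul]

theorem taylorProj₂_monomial_smul [CharZero K] {mb : M}
    (hmb : mb ∈ LinearMap.ker Dx ⊓ LinearMap.ker Dy) {a b N : ℕ} (ha : a < N) (hb : b < N) :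
    taylorProj₂ Dx Dy N (((X 0 : MvPolynomial (Fin 2) K) ^ a * X 1 ^ b) • mb) =
      if a = 0 ∧ b = 0 then mb else 0 := by
  obtain ⟨hx, hy⟩ := hmb
  have hX0 : ∀ v, taylorProj (1 : Fin 2) Dy N ((X 0 : MvPolynomial (Fin 2) K) ^ a • v) =
      (X 0 : MvPolynomial (Fin 2) K) ^ a • taylorProj (1 : Fin 2) Dy N v :=
    LinearMap.congr_fun (commute_taylorProj (fun _ => Commute.all _ _ |>.map _)
      (hDy.commute_lsmul_X_pow zero_ne_one a).symm N).eq.symm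
  change taylorProj (0 : Fin 2) Dx N (taylorProj (1 : Fin 2) Dy N _) = _
  rw [mul_smul, hX0, hDy.taylorProj_X_pow_smul hy hb]
  by_cases hb0 : b = 0
  · rw [if_pos hb0, hDx.taylorProj_X_pow_smul hx ha]
    simp [hb0]
  · simp [hb0]

theorem taylorProj₂_pow_pow_monomial_smul [CharZero K] {mb : M}
    (hmb : mb ∈ LinearMap.ker Dx ⊓ LinearMap.ker Dy) {a b N : ℕ} (ha : a < N) (hb : b < N)
    (i j : ℕ) :
    taylorProj₂ Dx Dy N
        ((Dx ^ i) ((Dy ^ j) (((X 0 : MvPolynomial (Fin 2) K) ^ a * X 1 ^ b) • mb))) =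
      if a = i ∧ b = j then ((i ! * j ! : ℕ) : K) • mb else 0 := by
  rw [pow_pow_monomial_smul hDx hDy hmb, map_smul,
    taylorProj₂_monomial_smul hDx hDy hmb (by omega) (by omega)]
  by_cases h : a = i ∧ b = j
  · obtain ⟨rfl, rfl⟩ := h
    simp [Nat.descFactorial_self]
  · rw [if_neg h]
    split_ifs with h'
    · obtain h'' | h'' : a < i ∨ b < j := by omega
      all_goals simp [Nat.descFactorial_eq_zero_iff_lt.mpr h'']
    · rw [smul_zero]

theorem mem_of_derivatives_mem [CharZero K] (hcomm : Commute Dx Dy)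
    {R : Submodule (MvPolynomial (Fin 2) K) M}
    (hker : ∀ m ∈ LinearMap.ker Dx ⊓ LinearMap.ker Dy, m ∈ R)
    (hRx : ∀ m ∈ R, Dx m ∈ R) (hRy : ∀ m ∈ R, Dy m ∈ R) {N : ℕ} {m : M}
    (hx : (Dx ^ (N + 1)) m = 0) (hy : (Dy ^ (N + 1)) m = 0) (hmx : Dx m ∈ R) (hmy : Dy m ∈ R) :
    m ∈ R := by
  have hxy : ∀ v, Dx (taylorProj (1 : Fin 2) Dy (N + 1) v) =
      taylorProj (1 : Fin 2) Dy (N + 1) (Dx v) :=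
    LinearMap.congr_fun (hDx.commute_taylorProj_of_ne hcomm one_ne_zero _).eq
  have hT : taylorProj (0 : Fin 2) Dx (N + 1) (taylorProj (1 : Fin 2) Dy (N + 1) m) ∈ R :=
    hker _ (taylorProj₂_mem_ker hDx hDy hcomm hx hy)
  have h0 := taylorProj_succ_sub_mem hRx (0 : Fin 2) N
    (m := taylorProj (1 : Fin 2) Dy (N + 1) m) (hxy m ▸ taylorProj_mem hRy _ _ hmx)
  have h1 := taylorProj_succ_sub_mem hRy (1 : Fin 2) N hmy
  convert R.sub_mem hT (R.add_mem h0 h1) using 1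
  abel

end TwoVariables

section MulMap

variable {M : Type*} [AddCommGroup M] [Module ℂ M] [Module P2 M] [IsScalarTower ℂ P2 M]

theorem range_mulMap (N : Submodule ℂ M) :
    LinearMap.range (mulMap M N) = Submodule.span P2 N := by
  rw [mulMap, LinearMap.range_liftBaseChange, Submodule.range_subtype]

variable {Dx Dy : Module.End ℂ M} (hDx : IsLeibniz (0 : Fin 2) Dx)
  (hDy : IsLeibniz (1 : Fin 2) Dy)
include hDx hDy

theorem mulMap_injective :
    Function.Injective (mulMap M (LinearMap.ker Dx ⊓ LinearMap.ker Dy)) := by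
  rw [injective_iff_map_eq_zero]
  intro t ht
  obtain ⟨c, rfl⟩ := TensorProduct.eq_repr_basis_left (basisMonomials (Fin 2) ℂ) t
  suffices c = 0 by simp [this]
  obtain ⟨N, hN⟩ : ∃ N, ∀ u ∈ c.support, u 0 < N ∧ u 1 < N :=
    ⟨c.support.sup (fun u => u 0 + u 1) + 1, fun u hu => by
      have := Finset.le_sup (f := fun u : Fin 2 →₀ ℕ => u 0 + u 1) hu; omega⟩
  ext v : 1
  have hv := congrArg (fun m => taylorProj₂ Dx Dy N ((Dx ^ v 0) ((Dy ^ v 1) m))) ht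
  simp only [map_finsuppSum, mulMap, LinearMap.liftBaseChange_tmul, coe_basisMonomials,
    monomial_one_fin_two, Submodule.coe_subtype, map_zero] at hv
  rw [Finsupp.coe_zero, Pi.zero_apply]
  by_cases hvc : v ∈ c.support
  · rw [Finsupp.sum, sum_eq_single_of_mem v hvc fun u hu huv => ?_,
      taylorProj₂_pow_pow_monomial_smul hDx hDy (c v).2 (hN v hvc).1 (hN v hvc).2,
      if_pos ⟨rfl, rfl⟩, smul_eq_zero] at hv
    · exact Subtype.ext (hv.resolve_left (Nat.cast_ne_zero.2 (by positivity)))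
    · rw [taylorProj₂_pow_pow_monomial_smul hDx hDy (c u).2 (hN u hu).1 (hN u hu).2, if_neg]
      contrapose! huv
      ext i
      fin_cases i
      exacts [huv.1, huv.2]
  · exact Finsupp.notMem_support_iff.1 hvc

theorem mulMap_surjective (hcomm : Commute Dx Dy) {g : ℕ → Submodule ℂ M}
    (hg : DirectSum.IsInternal g) (hDx0 : ∀ m ∈ g 0, Dx m = 0) (hDy0 : ∀ m ∈ g 0, Dy m = 0)
    (hDxdeg : ∀ d : ℕ, ∀ m ∈ g (d + 1), Dx m ∈ g d)
    (hDydeg : ∀ d : ℕ, ∀ m ∈ g (d + 1), Dy m ∈ g d) :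
    Function.Surjective (mulMap M (LinearMap.ker Dx ⊓ LinearMap.ker Dy)) := by
  set R := Submodule.span P2 (LinearMap.ker Dx ⊓ LinearMap.ker Dy : Set M)
  have hker : ∀ m ∈ LinearMap.ker Dx ⊓ LinearMap.ker Dy, m ∈ R :=
    fun m hm => Submodule.subset_span hm
  have hR : ∀ d, ∀ m ∈ g d, m ∈ R := by
    intro d
    induction d with
    | zero => exact fun m hm => hker m ⟨hDx0 m hm, hDy0 m hm⟩
    | succ d ih =>
      intro m hm
      exact mem_of_derivatives_mem hDx hDy hcomm hker
        (fun _ => hDx.apply_mem_span fun m hm => hm.1)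
        (fun _ => hDy.apply_mem_span fun m hm => hm.2)
        (pow_succ_apply_eq_zero_of_mem hDx0 hDxdeg hm)
        (pow_succ_apply_eq_zero_of_mem hDy0 hDydeg hm) (ih _ (hDxdeg d m hm))
        (ih _ (hDydeg d m hm))
  rw [← LinearMap.range_eq_top, range_mulMap, eq_top_iff]
  intro m _
  exact Submodule.iSup_induction g (motive := (· ∈ R))
    (hg.submodule_iSup_eq_top ▸ Submodule.mem_top) hR (zero_mem _) fun _ _ => add_mem

end MulMap

theorem stmt11_general (M : Type) [AddCommGroup M] [Module ℂ M] [Module P2 M]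
    [IsScalarTower ℂ P2 M] [Module.Finite P2 M]
    -- an ℕ-grading `M = ⊕_d M_d` by ℂ-subspaces…
    (g : ℕ → Submodule ℂ M) (hg : DirectSum.IsInternal g)
    (Dx Dy : M →ₗ[ℂ] M)
    -- `D_x`, `D_y` have degree −1
    (hDx0 : ∀ m ∈ g 0, Dx m = 0) (hDy0 : ∀ m ∈ g 0, Dy m = 0)
    (hDxdeg : ∀ d : ℕ, ∀ m ∈ g (d + 1), Dx m ∈ g d)
    (hDydeg : ∀ d : ℕ, ∀ m ∈ g (d + 1), Dy m ∈ g d)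
    -- they commute
    (hcomm : Dx ∘ₗ Dy = Dy ∘ₗ Dx)
    -- and satisfy the Leibniz rules
    (hLx : ∀ (f : P2) (m : M), Dx (f • m) = (pderiv 0 f) • m + f • Dx m)
    (hLy : ∀ (f : P2) (m : M), Dy (f • m) = (pderiv 1 f) • m + f • Dy m) :
    -- then the multiplication map `ℂ[x,y] ⊗ M̄ → M` is an isomorphism of
    -- `ℂ[x,y]`-modules; in particular `M` is free and `M̄` is finite dimensional
    Function.Bijective (mulMap M (LinearMap.ker Dx ⊓ LinearMap.ker Dy)) ∧
    Module.Free P2 M ∧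
    FiniteDimensional ℂ ↥(LinearMap.ker Dx ⊓ LinearMap.ker Dy) := by
  have hbij : Function.Bijective (mulMap M (LinearMap.ker Dx ⊓ LinearMap.ker Dy)) :=
    ⟨mulMap_injective hLx hLy, mulMap_surjective hLx hLy hcomm hg hDx0 hDy0 hDxdeg hDydeg⟩
  let e := LinearEquiv.ofBijective _ hbij
  have : Module.Finite P2 (P2 ⊗[ℂ] ↥(LinearMap.ker Dx ⊓ LinearMap.ker Dy)) := .equiv e.symm
  exact ⟨hbij, .of_equiv e, .of_finite_tensorProduct_of_faithfullyFlat P2⟩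

theorem stmt11 (M : Type) [AddCommGroup M] [Module ℂ M] [Module P2 M]
    [IsScalarTower ℂ P2 M] [Module.Finite P2 M]
    -- an ℕ-grading `M = ⊕_d M_d` by ℂ-subspaces…
    (g : ℕ → Submodule ℂ M) (hg : DirectSum.IsInternal g)
    -- …for which multiplication by `x` and `y` has degree 1
    (hgx : ∀ d : ℕ, ∀ m ∈ g d, (X 0 : P2) • m ∈ g (d + 1))
    (hgy : ∀ d : ℕ, ∀ m ∈ g d, (X 1 : P2) • m ∈ g (d + 1))
    (Dx Dy : M →ₗ[ℂ] M)
    -- `D_x`, `D_y` have degree −1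
    (hDx0 : ∀ m ∈ g 0, Dx m = 0) (hDy0 : ∀ m ∈ g 0, Dy m = 0)
    (hDxdeg : ∀ d : ℕ, ∀ m ∈ g (d + 1), Dx m ∈ g d)
    (hDydeg : ∀ d : ℕ, ∀ m ∈ g (d + 1), Dy m ∈ g d)
    -- they commute
    (hcomm : Dx ∘ₗ Dy = Dy ∘ₗ Dx)
    -- and satisfy the Leibniz rules
    (hLx : ∀ (f : P2) (m : M), Dx (f • m) = (pderiv 0 f) • m + f • Dx m)
    (hLy : ∀ (f : P2) (m : M), Dy (f • m) = (pderiv 1 f) • m + f • Dy m) :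
    -- then the multiplication map `ℂ[x,y] ⊗ M̄ → M` is an isomorphism of
    -- `ℂ[x,y]`-modules; in particular `M` is free and `M̄` is finite dimensional
    Function.Bijective (mulMap M (LinearMap.ker Dx ⊓ LinearMap.ker Dy)) ∧
    Module.Free P2 M ∧
    FiniteDimensional ℂ ↥(LinearMap.ker Dx ⊓ LinearMap.ker Dy) :=
  stmt11_general M g hg Dx Dy hDx0 hDy0 hDxdeg hDydeg hcomm hLx hLy
end
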